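/- For every α ∈ (0,1/2) there exists a unique real number c > 0 satisfying ((1+c)/c)·(1 − log(1+c)/c) = 1/2 + α. -/

import Mathlib

open Real Set

/-- `x/(1+x) < log (1+x)` for `x > 0`. -/
lemma aux_log_lb (x : ℝ) (hx : 0 < x) : x / (1 + x) < Real.log (1 + x) := by
  have h1 : (0:ℝ) < 1 + x := by linarith
  have h2 : ((1 + x)⁻¹ : ℝ) ≠ 1 := by
    intro h
    have : (1:ℝ) + x = 1 := by
      field_simp at h; linarith
    linarith
  have h3 := Real.log_lt_sub_one_of_pos (inv_pos.2 h1) h2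
  rw [Real.log_inv] at h3
  have h4 : x / (1 + x) = 1 - (1 + x)⁻¹ := by field_simp; ring
  linarith

/-- key: `2x < (x+2)·log(1+x)` for `x > 0`. -/
lemma aux_key (x : ℝ) (hx : 0 < x) : 2 * x < (x + 2) * Real.log (1 + x) := by
  set g : ℝ → ℝ := fun y => (y + 2) * Real.log (1 + y) - 2 * y with hg
  have hderiv : ∀ y : ℝ, 0 ≤ y →
      HasDerivAt g (1 * Real.log (1 + y) + (y + 2) * (1 / (1 + y)) - 2) y := by
    intro y hy
    have h1 : (0:ℝ) < 1 + y := by linarith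
    have hlog : HasDerivAt (fun z : ℝ => Real.log (1 + z)) (1 / (1 + y)) y := by
      have h := ((hasDerivAt_id y).const_add 1).log h1.ne'
      simpa using h
    have hmul := ((hasDerivAt_id y).add_const 2).mul hlog
    have hlin : HasDerivAt (fun z : ℝ => 2 * z) 2 y := by
      simpa using (hasDerivAt_id y).const_mul 2
    exact hmul.sub hlin
  have hcont : ContinuousOn g (Ici 0) := fun y hy =>
    ((hderiv y hy).continuousAt).continuousWithinAt
  have hmono : StrictMonoOn g (Ici 0) := by
    apply strictMonoOn_of_deriv_pos (convex_Ici 0) hcont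
    intro y hy
    rw [interior_Ici] at hy
    have hy' : (0:ℝ) < y := hy
    rw [(hderiv y hy'.le).deriv]
    have h1 : (0:ℝ) < 1 + y := by linarith
    have h2 := aux_log_lb y hy'
    have h3 : (y + 2) * (1 / (1 + y)) - 2 = -(y / (1 + y)) := by
      field_simp
      ring
    nlinarith [h2]
  have h0 : g 0 < g x := hmono (self_mem_Ici) (le_of_lt hx) hx
  simp [hg] at h0
  linarith

noncomputable def auxF : ℝ → ℝ := fun c => ((1 + c) / c) * (1 - Real.log (1 + c) / c)

lemma auxF_hasDeriv (x : ℝ) (hx : 0 < x) :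
    HasDerivAt auxF (((x + 2) * Real.log (1 + x) - 2 * x) / x ^ 3) x := by
  have h1 : (0:ℝ) < 1 + x := by linarith
  have hlog : HasDerivAt (fun z : ℝ => Real.log (1 + z)) (1 / (1 + x)) x := by
    have h := ((hasDerivAt_id x).const_add 1).log h1.ne'
    simpa using h
  have hdiv2 : HasDerivAt (fun z : ℝ => Real.log (1 + z) / z)
      ((1 / (1 + x) * x - Real.log (1 + x) * 1) / x ^ 2) x :=
    hlog.div (hasDerivAt_id x) hx.ne'
  have hnum : HasDerivAt (fun z : ℝ => 1 - Real.log (1 + z) / z)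
      (0 - (1 / (1 + x) * x - Real.log (1 + x) * 1) / x ^ 2) x :=
    (hasDerivAt_const x (1:ℝ)).sub hdiv2
  have hfrac : HasDerivAt (fun z : ℝ => (1 + z) / z)
      ((1 * x - (1 + x) * 1) / x ^ 2) x :=
    ((hasDerivAt_id x).const_add 1).div (hasDerivAt_id x) hx.ne'
  have hF := hfrac.mul hnum
  convert hF using 1
  · rfl
  · rfl
  · rfl
  field_simp
  ring

lemma auxF_mono : StrictMonoOn auxF (Ioi 0) := by
  apply strictMonoOn_of_deriv_pos (convex_Ioi 0)
  · intro x hx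
    exact ((auxF_hasDeriv x hx).continuousAt).continuousWithinAt
  · intro x hx
    rw [interior_Ioi] at hx
    rw [(auxF_hasDeriv x hx).deriv]
    exact div_pos (by linarith [aux_key x hx]) (pow_pos hx 3)

/-- For every `α ∈ (0, 1/2)` there is a unique `c > 0` with
`((1+c)/c)·(1 − log(1+c)/c) = 1/2 + α`. -/
theorem stmt3 (α : ℝ) (hα : α ∈ Set.Ioo (0 : ℝ) (1 / 2)) :
    ∃! c : ℝ, 0 < c ∧ ((1 + c) / c) * (1 - Real.log (1 + c) / c) = 1 / 2 + α := by
  obtain ⟨hα0, hα2⟩ := hα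
  obtain ⟨ε, hε⟩ : ∃ ε : ℝ, ε = 1 / 2 - α := ⟨_, rfl⟩
  have hε0 : 0 < ε := by rw [hε]; linarith
  have hε1 : ε < 1 / 2 := by rw [hε]; linarith
  obtain ⟨a, ha⟩ : ∃ a : ℝ, a = 2 * α := ⟨_, rfl⟩
  obtain ⟨b, hb⟩ : ∃ b : ℝ, b = 32 / ε ^ 2 := ⟨_, rfl⟩
  have ha0 : 0 < a := by rw [ha]; positivity
  have hb128 : 128 ≤ b := by
    rw [hb, le_div_iff₀ (by positivity)]
    nlinarith [hε0, hε1, mul_pos hε0 hε0]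
  have ha1 : a < 1 := by rw [ha]; linarith
  have hab : a ≤ b := by linarith
  have hb0 : 0 < b := by linarith
  -- F a < 1/2 + α
  have hFa : auxF a < 1 / 2 + α := by
    have hkey := aux_key a ha0
    have hL : 0 ≤ Real.log (1 + a) := Real.log_nonneg (by linarith)
    have ha' : a ≠ 0 := ha0.ne'
    have hFa' : auxF a = (1 + a) * (a - Real.log (1 + a)) / a ^ 2 := by
      unfold auxF; field_simp
    rw [hFa', div_lt_iff₀ (by positivity)]
    nlinarith [hkey, hL, ha, hα0, mul_pos ha0 ha0,
      mul_lt_mul_of_pos_left hkey (show (0:ℝ) < 1 + a by linarith),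
      mul_nonneg (mul_nonneg ha0.le ha0.le) hα0.le]
  -- F b > 1/2 + α
  have hFb : 1 / 2 + α < auxF b := by
    have h1b : (0:ℝ) < 1 + b := by linarith
    have hlog1 : Real.log (1 + b) = 2 * Real.log (Real.sqrt (1 + b)) := by
      rw [Real.log_sqrt h1b.le]; ring
    have hlog2 : Real.log (Real.sqrt (1 + b)) ≤ Real.sqrt (1 + b) - 1 :=
      Real.log_le_sub_one_of_pos (Real.sqrt_pos.2 h1b)
    have hεb : ε ^ 2 * b = 32 := by
      rw [hb]; field_simp
    have hsq : Real.sqrt (1 + b) < ε * b / 2 := by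
      rw [Real.sqrt_lt' (by positivity)]
      nlinarith [hεb, hb128, hb0]
    have hLb : Real.log (1 + b) < ε * b := by
      calc Real.log (1 + b) = 2 * Real.log (Real.sqrt (1 + b)) := hlog1
        _ ≤ 2 * (Real.sqrt (1 + b) - 1) := by linarith
        _ < ε * b := by linarith
    have hLnn : 0 ≤ Real.log (1 + b) := Real.log_nonneg (by linarith)
    have hbL : Real.log (1 + b) < b := by nlinarith [hLb, hε1, hb0]
    have hb' : b ≠ 0 := hb0.ne'
    have hFb' : auxF b = (1 + b) * (b - Real.log (1 + b)) / b ^ 2 := by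
      unfold auxF; field_simp
    rw [hFb', lt_div_iff₀ (by positivity)]
    nlinarith [hLb, hLnn, hbL, hb0, hε,
      mul_lt_mul_of_pos_left hLb hb0, mul_pos hb0 hb0]
  -- IVT
  have hsub : Icc a b ⊆ Ioi 0 := fun x hx => lt_of_lt_of_le ha0 hx.1
  have hcont : ContinuousOn auxF (Icc a b) := fun x hx =>
    ((auxF_hasDeriv x (hsub hx)).continuousAt).continuousWithinAt
  have hmem : (1 / 2 + α) ∈ Icc (auxF a) (auxF b) := ⟨hFa.le, hFb.le⟩
  obtain ⟨c, hc, hfc⟩ := intermediate_value_Icc hab hcont hmem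
  have hc0 : 0 < c := lt_of_lt_of_le ha0 hc.1
  refine ⟨c, ⟨hc0, hfc⟩, ?_⟩
  rintro y ⟨hy0, hfy⟩
  exact auxF_mono.injOn hy0 hc0 (by rw [show auxF y = _ from hfy, show auxF c = _ from hfc])
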